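/- Every function a in AP(ℤ⁺) + c₀(ℤ⁺) has a unique representation a = f|_{ℤ⁺} + c, where f : ℤ → ℂ is almost periodic and c ∈ c₀(ℤ⁺). Equivalently, if the restriction to ℤ⁺ of an almost periodic function f on ℤ lies in c₀(ℤ⁺), then f|_{ℤ⁺} = 0. -/

import Mathlib

/-!
Translation is an isometry of `ℓ^∞(ℤ)`, so two forward translates `f_m`, `f_n` close to a common
cluster point differ by the translate `f_{n-m}` close to `f`: compactness of the translates makes `f`
a cluster point of `k ↦ f_k` as `k → +∞`. Along a subsequence `h`, `f (n + h k) → f n`; if `f|ℤ⁺ ∈ c₀`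
the same values tend to `0`. Uniqueness of the decomposition is this applied to `f₁ - f₂`, almost
periodic because its translates lie in the image of a compact set of pairs under subtraction.
-/

open Filter

/-- The translate `a_k`, `a_k (n) = a (n + k)`, of a bounded function on `ℤ`. -/
noncomputable def shiftBCF (a : BoundedContinuousFunction ℤ ℂ) (k : ℤ) : BoundedContinuousFunction ℤ ℂ :=
  a.compContinuous ⟨fun n => n + k, continuous_of_discreteTopology⟩

/-- A bounded function on `ℤ` is almost periodic if its set of translates is
relatively compact in `ℓ^∞(ℤ)`. -/
def AlmostPeriodic (a : BoundedContinuousFunction ℤ ℂ) : Prop :=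
  IsCompact (closure (Set.range (shiftBCF a)))

open Topology Metric

section Shift

variable (a b : BoundedContinuousFunction ℤ ℂ)

@[simp]
lemma shiftBCF_apply (k n : ℤ) : shiftBCF a k n = a (n + k) := rfl

lemma shiftBCF_sub (k : ℤ) : shiftBCF (a - b) k = shiftBCF a k - shiftBCF b k := rfl

lemma shiftBCF_shiftBCF (j k : ℤ) : shiftBCF (shiftBCF a j) k = shiftBCF a (k + j) := by
  ext n; simp [add_assoc]

lemma shiftBCF_zero : shiftBCF a 0 = a := by
  ext n; simp

lemma dist_shiftBCF_le (k : ℤ) : dist (shiftBCF a k) (shiftBCF b k) ≤ dist a b :=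
  (BoundedContinuousFunction.dist_le dist_nonneg).2 fun n =>
    BoundedContinuousFunction.dist_coe_le_dist (n + k)

lemma dist_shiftBCF (k : ℤ) : dist (shiftBCF a k) (shiftBCF b k) = dist a b := by
  refine le_antisymm (dist_shiftBCF_le a b k) ?_
  simpa [shiftBCF_shiftBCF, shiftBCF_zero] using dist_shiftBCF_le (shiftBCF a k) (shiftBCF b k) (-k)

lemma dist_shiftBCF_add_shiftBCF (j k : ℤ) :
    dist (shiftBCF a (j + k)) (shiftBCF a j) = dist (shiftBCF a k) a := by
  rw [← shiftBCF_shiftBCF, dist_shiftBCF]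

end Shift

namespace AlmostPeriodic

variable {f g : BoundedContinuousFunction ℤ ℂ}

lemma sub (hf : AlmostPeriodic f) (hg : AlmostPeriodic g) : AlmostPeriodic (f - g) := by
  have hcomp : IsCompact (Set.image2 (· - ·) (closure (Set.range (shiftBCF f)))
      (closure (Set.range (shiftBCF g)))) := by
    rw [← Set.image_prod]
    exact (hf.prod hg).image (continuous_fst.sub continuous_snd)
  refine hcomp.of_isClosed_subset isClosed_closure (closure_minimal ?_ hcomp.isClosed)
  rintro _ ⟨k, rfl⟩
  exact ⟨_, subset_closure ⟨k, rfl⟩, _, subset_closure ⟨k, rfl⟩, (shiftBCF_sub f g k).symm⟩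

lemma mapClusterPt_shiftBCF (hf : AlmostPeriodic f) :
    MapClusterPt f atTop (fun k : ℕ => shiftBCF f k) := by
  obtain ⟨x, -, hx⟩ := hf.exists_mapClusterPt_of_frequently (l := atTop)
    (f := fun k : ℕ => shiftBCF f k) (.of_forall fun k => subset_closure ⟨k, rfl⟩)
  rw [nhds_basis_ball.mapClusterPt_iff_frequently] at hx ⊢
  intro ε hε
  obtain ⟨m, hm⟩ := (hx (ε / 2) (half_pos hε)).exists
  refine frequently_atTop.2 fun N => ?_
  obtain ⟨n, hn, hnx⟩ := frequently_atTop.1 (hx (ε / 2) (half_pos hε)) (N + m)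
  refine ⟨n - m, by omega, ?_⟩
  have hcast : (n : ℤ) = m + ((n - m : ℕ) : ℤ) := by omega
  rw [mem_ball] at hm hnx ⊢
  calc dist (shiftBCF f (n - m : ℕ)) f = dist (shiftBCF f n) (shiftBCF f m) := by
        rw [hcast, dist_shiftBCF_add_shiftBCF]
    _ ≤ dist (shiftBCF f n) x + dist (shiftBCF f m) x := dist_triangle_right _ _ _
    _ < ε / 2 + ε / 2 := add_lt_add hnx hm
    _ = ε := add_halves ε

lemma eq_zero_of_tendsto_zero (hf : AlmostPeriodic f)
    (h0 : Tendsto (fun n : ℕ => f n) atTop (𝓝 0)) (n : ℕ) : f n = 0 := by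
  obtain ⟨h, hh, hlim⟩ := hf.mapClusterPt_shiftBCF.tendsto_subseq
  have to_value : Tendsto (fun k => f ((n + h k : ℕ) : ℤ)) atTop (𝓝 (f n)) := by
    simpa [Function.comp_def] using ((continuous_eval_const (n : ℤ)).tendsto f).comp hlim
  have to_zero : Tendsto (fun k => f ((n + h k : ℕ) : ℤ)) atTop (𝓝 0) :=
    h0.comp (tendsto_atTop_mono (fun k => Nat.le_add_left _ _) hh.tendsto_atTop)
  exact tendsto_nhds_unique to_value to_zero

end AlmostPeriodic

/-- Every function in `AP(ℤ⁺) + c₀(ℤ⁺)` has a unique representation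
`a = f|_{ℤ⁺} + c` with `f` almost periodic on `ℤ` and `c ∈ c₀(ℤ⁺)`: if
`f₁|_{ℤ⁺} + c₁ = f₂|_{ℤ⁺} + c₂` then the restrictions of `f₁` and `f₂` to `ℤ⁺`
coincide and `c₁ = c₂`.  Equivalently, if the restriction to `ℤ⁺` of an almost
periodic function `f` on `ℤ` lies in `c₀(ℤ⁺)`, then this restriction is zero. -/
theorem ap_plus_c0_decomposition_unique :
    (∀ f₁ f₂ : BoundedContinuousFunction ℤ ℂ, ∀ c₁ c₂ : ℕ → ℂ,
      AlmostPeriodic f₁ → AlmostPeriodic f₂ →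
      Tendsto c₁ atTop (nhds 0) → Tendsto c₂ atTop (nhds 0) →
      (∀ n : ℕ, f₁ (n : ℤ) + c₁ n = f₂ (n : ℤ) + c₂ n) →
      (∀ n : ℕ, f₁ (n : ℤ) = f₂ (n : ℤ)) ∧ c₁ = c₂) ∧
    (∀ f : BoundedContinuousFunction ℤ ℂ, AlmostPeriodic f →
      Tendsto (fun n : ℕ => f (n : ℤ)) atTop (nhds 0) →
      ∀ n : ℕ, f (n : ℤ) = 0) := by
  refine ⟨fun f₁ f₂ c₁ c₂ hf₁ hf₂ hc₁ hc₂ heq => ?_, fun f hf => hf.eq_zero_of_tendsto_zero⟩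
  have hdiff : ∀ n : ℕ, (f₁ - f₂) n = c₂ n - c₁ n := fun n => by
    rw [BoundedContinuousFunction.coe_sub, Pi.sub_apply]
    linear_combination heq n
  have hdiff_zero : Tendsto (fun n : ℕ => (f₁ - f₂) n) atTop (𝓝 0) := by
    simpa [hdiff] using hc₂.sub hc₁
  have hf : ∀ n : ℕ, f₁ n = f₂ n := fun n =>
    sub_eq_zero.1 ((hf₁.sub hf₂).eq_zero_of_tendsto_zero hdiff_zero n)
  exact ⟨hf, funext fun n => add_left_cancel (hf n ▸ heq n)⟩
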